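/- Let k, m be real numbers with k > 0, m > 1 and k² > 4(m−1). Set z₂⁺ = (k + 2m − 2 + √(k² − 4m + 4))/(k + m) and z₂⁻ = (k + 2m − 2 − √(k² − 4m + 4))/(k + m). Then z₂⁺ and z₂⁻ are distinct positive real numbers, and both points (1, z₂⁺) and (1, z₂⁻) are solutions of the system f₁ = 0, f₂ = 0. -/
import Mathlib


/-- The first polynomial of the compactified normalized Ricci flow at infinity
for the generalized Wallach space SO(k+2m)/SO(k)×SO(m)×SO(m). -/
noncomputable def f₁ (k m z₁ z₂ : ℝ) : ℝ :=
  2 * m * (z₁ - 1) * z₁ * (2 * k + m) * (m * (z₁ + 1) - z₂ * (k + 2 * m - 2))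

/-- The second polynomial of the compactified normalized Ricci flow at infinity
for the generalized Wallach space SO(k+2m)/SO(k)×SO(m)×SO(m). -/
noncomputable def f₂ (k m z₁ z₂ : ℝ) : ℝ :=
  -m * z₂ * (2 * k + m) *
    (k * (2 * z₁ * z₂ + (z₁ - 1) ^ 2 - z₂ ^ 2) + 4 * (m - 1) * z₁ * z₂
      - m * z₁ * (z₁ + 4) - m * z₂ ^ 2 + m + 4 * z₁)

theorem wallach_so_z1_eq_one_solutions (k m : ℝ) (hk : 0 < k) (hm : 1 < m)
    (hkm : 4 * (m - 1) < k ^ 2) :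
    (k + 2 * m - 2 + Real.sqrt (k ^ 2 - 4 * m + 4)) / (k + m) ≠
      (k + 2 * m - 2 - Real.sqrt (k ^ 2 - 4 * m + 4)) / (k + m) ∧
    0 < (k + 2 * m - 2 + Real.sqrt (k ^ 2 - 4 * m + 4)) / (k + m) ∧
    0 < (k + 2 * m - 2 - Real.sqrt (k ^ 2 - 4 * m + 4)) / (k + m) ∧
    f₁ k m 1 ((k + 2 * m - 2 + Real.sqrt (k ^ 2 - 4 * m + 4)) / (k + m)) = 0 ∧
    f₂ k m 1 ((k + 2 * m - 2 + Real.sqrt (k ^ 2 - 4 * m + 4)) / (k + m)) = 0 ∧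
    f₁ k m 1 ((k + 2 * m - 2 - Real.sqrt (k ^ 2 - 4 * m + 4)) / (k + m)) = 0 ∧
    f₂ k m 1 ((k + 2 * m - 2 - Real.sqrt (k ^ 2 - 4 * m + 4)) / (k + m)) = 0 := by
  have hd : (0:ℝ) < k ^ 2 - 4 * m + 4 := by nlinarith
  set s := Real.sqrt (k ^ 2 - 4 * m + 4) with hs
  have hs0 : 0 < s := Real.sqrt_pos.mpr hd
  have hs2 : s ^ 2 = k ^ 2 - 4 * m + 4 := Real.sq_sqrt hd.le
  have hkm0 : (0:ℝ) < k + m := by linarith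
  have hslt : s < k + 2 * m - 2 := by nlinarith [hs2, hs0]
  set zp := (k + 2 * m - 2 + s) / (k + m) with hzp
  set zm := (k + 2 * m - 2 - s) / (k + m) with hzm
  have hzp' : zp * (k + m) = k + 2 * m - 2 + s := div_mul_cancel₀ _ hkm0.ne'
  have hzm' : zm * (k + m) = k + 2 * m - 2 - s := div_mul_cancel₀ _ hkm0.ne'
  have hEp : (2 * k + 4 * m - 4) * zp - (k + m) * zp ^ 2 + (4 - 4 * m) = 0 := by
    have h : (k + m) * ((2 * k + 4 * m - 4) * zp - (k + m) * zp ^ 2 + (4 - 4 * m)) = 0 := by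
      linear_combination ((k + 2 * m - 2) - s - zp * (k + m)) * hzp' - hs2
    exact (mul_eq_zero.mp h).resolve_left hkm0.ne'
  have hEm : (2 * k + 4 * m - 4) * zm - (k + m) * zm ^ 2 + (4 - 4 * m) = 0 := by
    have h : (k + m) * ((2 * k + 4 * m - 4) * zm - (k + m) * zm ^ 2 + (4 - 4 * m)) = 0 := by
      linear_combination ((k + 2 * m - 2) + s - zm * (k + m)) * hzm' - hs2
    exact (mul_eq_zero.mp h).resolve_left hkm0.ne'
  refine ⟨?_, ?_, ?_, ?_, ?_, ?_, ?_⟩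
  · intro h
    rw [div_eq_div_iff hkm0.ne' hkm0.ne'] at h
    nlinarith
  · exact div_pos (by linarith) hkm0
  · exact div_pos (by linarith) hkm0
  · simp [f₁]
  · unfold f₂
    linear_combination (-m * zp * (2 * k + m)) * hEp
  · simp [f₁]
  · unfold f₂
    linear_combination (-m * zm * (2 * k + m)) * hEm
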